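/- arXiv:2001.00201 — 6 statements merged into one kernel-verified Lean document; each statement's English description precedes it below -/
import Mathlib

section
/- Let A be the subalgebra of 3×3 complex matrices of the form [[a,b,c],[0,a,d],[0,0,a]], X = E₂₃, δ(M) = MX, τ(M) = XM. Then there exists no linear map γ : A → A such that γ(MN) = δ(M)N + Mτ(N) for all M, N ∈ A. -/
open Matrix

/-- The unital ℂ-subalgebra of M₃(ℂ) of matrices [[a,b,c],[0,a,d],[0,0,a]]. -/
def UT3 : Subalgebra ℂ (Matrix (Fin 3) (Fin 3) ℂ) where
  carrier := {M | M 1 0 = 0 ∧ M 2 0 = 0 ∧ M 2 1 = 0 ∧ M 0 0 = M 1 1 ∧ M 1 1 = M 2 2}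
  mul_mem' := by
    rintro M N ⟨h1, h2, h3, h4, h5⟩ ⟨k1, k2, k3, k4, k5⟩
    refine ⟨?_, ?_, ?_, ?_, ?_⟩ <;>
      simp only [Matrix.mul_apply, Fin.sum_univ_three, h1, h2, h3, h4, h5, k1, k2, k3, k4, k5] <;>
      ring
  add_mem' := by
    rintro M N ⟨h1, h2, h3, h4, h5⟩ ⟨k1, k2, k3, k4, k5⟩
    refine ⟨?_, ?_, ?_, ?_, ?_⟩ <;>
      simp only [Matrix.add_apply, h1, h2, h3, h4, h5, k1, k2, k3, k4, k5] <;> ring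
  one_mem' := by
    refine ⟨?_, ?_, ?_, ?_, ?_⟩ <;> simp [Matrix.one_apply]
  zero_mem' := by
    refine ⟨?_, ?_, ?_, ?_, ?_⟩ <;> simp
  algebraMap_mem' := by
    intro r
    refine ⟨?_, ?_, ?_, ?_, ?_⟩ <;>
      simp [Matrix.algebraMap_matrix_apply]

theorem commute_of_map_mul_eq_mul_mul_add_mul_mul {R A : Type*} [CommSemiring R] [Semiring A]
    [IsAddTorsionFree A] [Algebra R A] {S : Subalgebra R A} {X : A} {γ : S → A}
    (hγ : ∀ M N : S, γ (M * N) = (M : A) * X * N + M * (X * N)) (M : S) :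
    Commute (M : A) X := by
  have hone_right : γ M = M * X + M * X := by simpa using hγ M 1
  have hone_left : γ M = X * M + X * M := by simpa using hγ 1 M
  rw [hone_right, ← two_nsmul, ← two_nsmul, nsmul_right_inj two_ne_zero] at hone_left
  exact hone_left

theorem Matrix.not_commute_single_single {n α : Type*} [Fintype n] [DecidableEq n] [Semiring α]
    [Nontrivial α] {i j k : n} (hki : k ≠ i) :
    ¬ Commute (single i j (1 : α)) (single j k 1) := by
  intro h
  have hmul := h.eq
  rw [single_mul_single_same, single_mul_single_of_ne (h := hki), mul_one] at hmul
  simpa using congrFun₂ hmul i k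

theorem single_zero_one_mem_UT3 : single (0 : Fin 3) 1 (1 : ℂ) ∈ UT3 := by
  refine ⟨?_, ?_, ?_, ?_, ?_⟩ <;> simp

/-- with X = E₂₃, δ(M) = MX, τ(N) = XN on the algebra UT3, there is no
ℂ-linear map γ : UT3 → UT3 such that γ(MN) = δ(M)N + Mτ(N) for all M, N ∈ UT3. -/
theorem stmt3 :
    ¬ ∃ γ : UT3 →ₗ[ℂ] UT3, ∀ M N : UT3,
      (γ (M * N) : Matrix (Fin 3) (Fin 3) ℂ) =
        ((M : Matrix (Fin 3) (Fin 3) ℂ) * Matrix.single 1 2 (1 : ℂ))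
            * (N : Matrix (Fin 3) (Fin 3) ℂ)
          + (M : Matrix (Fin 3) (Fin 3) ℂ)
            * (Matrix.single 1 2 (1 : ℂ) * (N : Matrix (Fin 3) (Fin 3) ℂ)) := by
  rintro ⟨γ, hγ⟩
  have : IsAddTorsionFree (Matrix (Fin 3) (Fin 3) ℂ) := .of_module_rat _
  have hcomm := commute_of_map_mul_eq_mul_mul_add_mul_mul (γ := fun M ↦ (γ M : Matrix _ _ ℂ)) hγ
    ⟨_, single_zero_one_mem_UT3⟩
  exact not_commute_single_single (by decide) hcomm
end

section
/- Let A be a unital associative algebra and δ, τ : A → A linear maps such that ab = 0 implies δ(a)b + aτ(b) = 0. Then for every a ∈ A and every idempotent p ∈ A: δ(ap) + apτ(1) = aτ(p) + δ(a)p. -/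
/-- if δ, τ are linear maps with δ(a)b + aτ(b) = 0 whenever ab = 0, then
for every a and every idempotent p: δ(ap) + apτ(1) = aτ(p) + δ(a)p. -/
theorem stmt4 {R A : Type*} [CommRing R] [Ring A] [Algebra R A]
    (δ τ : A →ₗ[R] A)
    (hZ : ∀ a b : A, a * b = 0 → δ a * b + a * τ b = 0)
    (a p : A) (hp : p * p = p) :
    δ (a * p) + a * p * τ 1 = a * τ p + δ a * p := by
  have h1 : a * p * (1 - p) = 0 := by
    have : a * p * (1 - p) = a * p - a * (p * p) := by noncomm_ring
    rw [this, hp, sub_self]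
  have h2 : (a - a * p) * p = 0 := by
    have : (a - a * p) * p = a * p - a * (p * p) := by noncomm_ring
    rw [this, hp, sub_self]
  have e1 := hZ _ _ h1
  have e2 := hZ _ _ h2
  rw [map_sub] at e1 e2
  linear_combination (norm := noncomm_ring) e1 - e2
end

section
/- Let A be a unital associative algebra and δ, τ : A → A linear maps such that ab = 0 implies δ(a)b + aτ(b) = 0. Then for every a ∈ A and every idempotent p ∈ A: τ(pa) + δ(1)pa = pτ(a) + δ(p)a. -/
/-- if δ, τ are linear maps with δ(a)b + aτ(b) = 0 whenever ab = 0, then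
for every a and every idempotent p: τ(pa) + δ(1)pa = pτ(a) + δ(p)a. -/
theorem stmt5 {R A : Type*} [CommRing R] [Ring A] [Algebra R A]
    (δ τ : A →ₗ[R] A)
    (hZ : ∀ a b : A, a * b = 0 → δ a * b + a * τ b = 0)
    (a p : A) (hp : p * p = p) :
    τ (p * a) + δ 1 * (p * a) = p * τ a + δ p * a := by
  have h1 := hZ (1 - p) (p * a) (by rw [sub_mul, one_mul, ← mul_assoc, hp, sub_self])
  have h2 := hZ p ((1 - p) * a) (by rw [← mul_assoc, mul_sub, mul_one, hp, sub_self, zero_mul])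
  rw [map_sub, sub_mul, sub_mul, one_mul] at h1
  rw [sub_mul, one_mul, map_sub, mul_sub, mul_sub] at h2
  rw [← sub_eq_zero]
  have h3 : (δ 1 * (p * a) - δ p * (p * a) + (τ (p * a) - p * τ (p * a))) -
      (δ p * a - δ p * (p * a) + (p * τ a - p * τ (p * a))) = 0 := by
    rw [h1, h2, sub_zero]
  rw [← h3]
  abel
end

section
/- Let X be a Banach space, N a nest on X such that every N ∈ 𝒩 with N₋ = N is complemented in X. If T ∈ B(X) satisfies TF = 0 for every finite rank operator F in Alg𝒩, then T = 0. -/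
/-!
Every member `N` of the nest with `closure N₋ ≠ X` lies in `ker T`: a functional `φ` that vanishes
on `N₋` but not at some `z` (Hahn–Banach) and a vector `e ∈ N` give the rank one operator
`x ↦ φ x • e` of `Alg 𝒩`, and `0 = T (φ z • e) = φ z • T e`. If `closure X₋ ≠ X` this applies to
`N = X`; otherwise every proper member `K` of the nest, being closed, has `closure K₋ ≤ K ≠ X`, so
`T` vanishes on the dense subspace `X₋`.
-/

section

variable {𝕜 X : Type*} [RCLike 𝕜] [NormedAddCommGroup X] [NormedSpace 𝕜 X]

theorem Submodule.exists_dual_ne_zero_and_forall_mem_eq_zero {P : Submodule 𝕜 X}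
    (hP : IsClosed (P : Set X)) {z : X} (hz : z ∉ P) :
    ∃ φ : StrongDual 𝕜 X, φ z ≠ 0 ∧ ∀ x ∈ P, φ x = 0 := by
  have := hP
  obtain ⟨g, hg⟩ := SeparatingDual.exists_ne_zero (R := 𝕜) (x := P.mkQ z)
    (by rwa [Submodule.mkQ_apply, Ne, Submodule.Quotient.mk_eq_zero])
  refine ⟨g ∘L P.mkQL, hg, fun x hx => ?_⟩
  rw [ContinuousLinearMap.comp_apply, Submodule.mkQL_apply, Submodule.mkQ_apply,
    (Submodule.Quotient.mk_eq_zero P).2 hx, map_zero]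

theorem smulRight_mem_of_isChain {𝒩 : Set (Submodule 𝕜 X)} (hchain : IsChain (· ≤ ·) 𝒩)
    {N : Submodule 𝕜 X} (hN : N ∈ 𝒩) {φ : StrongDual 𝕜 X}
    (hφ : ∀ M ∈ 𝒩, M < N → ∀ x ∈ M, φ x = 0) {e : X} (he : e ∈ N) :
    ∀ M ∈ 𝒩, ∀ x ∈ M, φ.smulRight e x ∈ M := by
  intro M hM x hx
  rw [ContinuousLinearMap.smulRight_apply]
  rcases eq_or_ne M N with rfl | hMN
  · exact M.smul_mem _ he
  rcases hchain hM hN hMN with hle | hle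
  · rw [hφ M hM (hle.lt_of_ne hMN) x hx, zero_smul]
    exact M.zero_mem
  · exact M.smul_mem _ (hle he)

theorem le_ker_of_topologicalClosure_sSup_lt_ne_top {𝒩 : Set (Submodule 𝕜 X)}
    (hchain : IsChain (· ≤ ·) 𝒩) {T : X →L[𝕜] X}
    (hT : ∀ F : X →L[𝕜] X, (∀ N ∈ 𝒩, ∀ x ∈ N, F x ∈ N) →
      FiniteDimensional 𝕜 (LinearMap.range (F : X →ₗ[𝕜] X)) → T.comp F = 0)
    {N : Submodule 𝕜 X} (hN : N ∈ 𝒩) (hNne : (sSup {M ∈ 𝒩 | M < N}).topologicalClosure ≠ ⊤) :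
    N ≤ LinearMap.ker (T : X →ₗ[𝕜] X) := by
  intro e he
  obtain ⟨z, hz⟩ := SetLike.exists_not_mem_of_ne_top _ hNne
  obtain ⟨φ, hφz, hφ⟩ := Submodule.exists_dual_ne_zero_and_forall_mem_eq_zero
    (Submodule.isClosed_topologicalClosure _) hz
  have hφ_lt : ∀ M ∈ 𝒩, M < N → ∀ x ∈ M, φ x = 0 := fun M hM hMN x hx =>
    hφ x <| Submodule.le_topologicalClosure _ <|
      le_sSup (show M ∈ {M ∈ 𝒩 | M < N} from ⟨hM, hMN⟩) hx
  have hrank : FiniteDimensional 𝕜 (LinearMap.range (φ.smulRight e : X →ₗ[𝕜] X)) := by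
    rw [ContinuousLinearMap.range_smulRight_apply (fun h => hφz (by rw [h, zero_apply]))]
    infer_instance
  have hTF := congrArg (· z) (hT _ (smulRight_mem_of_isChain hchain hN hφ_lt he) hrank)
  simp only [ContinuousLinearMap.comp_apply, ContinuousLinearMap.smulRight_apply, map_smul,
    zero_apply, smul_eq_zero] at hTF
  exact hTF.resolve_left hφz

end

theorem stmt14_general {𝕜 X : Type*} [RCLike 𝕜] [NormedAddCommGroup X] [NormedSpace 𝕜 X]
    (𝒩 : Set (Submodule 𝕜 X))
    (hclosed : ∀ N ∈ 𝒩, IsClosed (N : Set X))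
    (htop : ⊤ ∈ 𝒩)
    (hchain : IsChain (· ≤ ·) 𝒩)
    (T : X →L[𝕜] X)
    (hT : ∀ F : X →L[𝕜] X, (∀ N ∈ 𝒩, ∀ x ∈ N, F x ∈ N) →
      FiniteDimensional 𝕜 (LinearMap.range (F : X →ₗ[𝕜] X)) → T.comp F = 0) :
    T = 0 := by
  have hker : LinearMap.ker (T : X →ₗ[𝕜] X) = ⊤ := by
    by_cases hdense : (sSup {M ∈ 𝒩 | M < ⊤}).topologicalClosure = ⊤
    · rw [eq_top_iff, ← hdense]
      refine Submodule.topologicalClosure_minimal _ (sSup_le fun K ⟨hK, hK_lt⟩ => ?_)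
        T.isClosed_ker
      have hK_pred : (sSup {M ∈ 𝒩 | M < K}).topologicalClosure ≤ K :=
        Submodule.topologicalClosure_minimal _ (sSup_le fun M hM => hM.2.le) (hclosed K hK)
      exact le_ker_of_topologicalClosure_sSup_lt_ne_top hchain hT hK
        (ne_top_of_le_ne_top hK_lt.ne hK_pred)
    · exact top_unique (le_ker_of_topologicalClosure_sSup_lt_ne_top hchain hT htop hdense)
  exact ContinuousLinearMap.coe_injective (LinearMap.ker_eq_top.1 hker)

/-- let 𝒩 be a nest on a Banach space X (a chain of closed subspaces
containing {0} and X, closed under intersections and closed linear spans) such that every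
N ∈ 𝒩 with N₋ = N is complemented in X. If T ∈ B(X) satisfies TF = 0 for every finite
rank operator F in Alg𝒩, then T = 0. -/
theorem stmt14 {𝕜 X : Type*} [RCLike 𝕜] [NormedAddCommGroup X] [NormedSpace 𝕜 X]
    [CompleteSpace X]
    (𝒩 : Set (Submodule 𝕜 X))
    (hclosed : ∀ N ∈ 𝒩, IsClosed (N : Set X))
    (hbot : ⊥ ∈ 𝒩) (htop : ⊤ ∈ 𝒩)
    (hchain : IsChain (· ≤ ·) 𝒩)
    (hinf : ∀ S ⊆ 𝒩, S.Nonempty → sInf S ∈ 𝒩)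
    (hsup : ∀ S ⊆ 𝒩, S.Nonempty → (sSup S).topologicalClosure ∈ 𝒩)
    (hcompl : ∀ N ∈ 𝒩,
      (sSup {M ∈ 𝒩 | M < N}).topologicalClosure = N → Submodule.ClosedComplemented N)
    (T : X →L[𝕜] X)
    (hT : ∀ F : X →L[𝕜] X, (∀ N ∈ 𝒩, ∀ x ∈ N, F x ∈ N) →
      FiniteDimensional 𝕜 (LinearMap.range (F : X →ₗ[𝕜] X)) → T.comp F = 0) :
    T = 0 :=
  stmt14_general 𝒩 hclosed htop hchain T hT
end

section
/- Let A be a unital associative algebra, and suppose δ, τ : A → A are linear maps satisfying: (i) δ(ab) = aδ(b) + δ(a)b − aδ(1)b for all a, b; (ii) τ(ab) = aτ(b) + τ(a)b − aτ(1)b for all a, b; (iii) δ(a) − δ(1)a = τ(a) − aτ(1) for all a. Then the linear map γ(a) := δ(a) + aτ(1) satisfies γ(ab) = δ(a)b + aτ(b) for all a, b ∈ A, i.e., (γ, δ, τ) is a ternary derivation of A, and moreover γ(a) = τ(a) + δ(1)a for all a. -/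
/-- Step 6: given the generalized derivation identities for δ and τ and
the compatibility δ(a) − δ(1)a = τ(a) − aτ(1), the map γ(a) := δ(a) + aτ(1) makes
(γ, δ, τ) a ternary derivation, and γ(a) = τ(a) + δ(1)a. -/
theorem stmt15 {R A : Type*} [CommRing R] [Ring A] [Algebra R A]
    (δ τ : A →ₗ[R] A)
    (hδ : ∀ a b : A, δ (a * b) = a * δ b + δ a * b - a * δ 1 * b)
    (hτ : ∀ a b : A, τ (a * b) = a * τ b + τ a * b - a * τ 1 * b)
    (hcomp : ∀ a : A, δ a - δ 1 * a = τ a - a * τ 1) :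
    (∀ a b : A, δ (a * b) + (a * b) * τ 1 = δ a * b + a * τ b) ∧
    (∀ a : A, δ a + a * τ 1 = τ a + δ 1 * a) := by
  constructor
  · intro a b
    have h2 : a * δ b - a * (δ 1 * b) = a * τ b - a * (b * τ 1) := by
      rw [← mul_sub, ← mul_sub, hcomp b]
    rw [hδ a b]
    have h3 : a * δ b + a * (b * τ 1) = a * τ b + a * (δ 1 * b) :=
      sub_eq_sub_iff_add_eq_add.mp h2
    rw [sub_add_eq_add_sub, mul_assoc a b (τ 1), mul_assoc a (δ 1) b]
    rw [add_right_comm (a * δ b) (δ a * b), h3]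
    abel
  · intro a
    have := hcomp a
    have h3 : δ a + a * τ 1 = τ a + δ 1 * a := sub_eq_sub_iff_add_eq_add.mp this
    exact h3
end

section
/- Let A be a unital associative algebra and (γ, δ, τ) a ternary derivation of A such that γ(a) = Ra + aT for some fixed R, T ∈ A and all a ∈ A. Then R + T = δ(1) + τ(1), and setting S := δ(1) − R, one has δ(a) = Ra + aS and τ(a) = −Sa + aT for all a ∈ A; in particular (γ, δ, τ) is an inner ternary derivation. -/
/-- if (γ, δ, τ) is a ternary derivation and γ(a) = ra + at, then
r + t = δ(1) + τ(1), and with s := δ(1) − r we have δ(a) = ra + as and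
τ(a) = −sa + at, i.e. (γ, δ, τ) is inner. -/
theorem stmt16 {R A : Type*} [CommRing R] [Ring A] [Algebra R A]
    (γ δ τ : A →ₗ[R] A)
    (h : ∀ a b : A, γ (a * b) = δ a * b + a * τ b)
    (r t : A) (hγ : ∀ a : A, γ a = r * a + a * t) :
    r + t = δ 1 + τ 1 ∧
    (∀ a : A, δ a = r * a + a * (δ 1 - r)) ∧
    (∀ a : A, τ a = -((δ 1 - r) * a) + a * t) := by
  have h1 : r + t = δ 1 + τ 1 := by
    have := h 1 1
    rw [mul_one, hγ] at this
    simpa using this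
  refine ⟨h1, ?_, ?_⟩
  · intro a
    have hd := h a 1
    rw [mul_one, mul_one, hγ] at hd
    have hτ1 : τ 1 = r + t - δ 1 := by
      have := h1; rw [this]; abel
    rw [hτ1] at hd
    have : δ a = r * a + a * t - a * (r + t - δ 1) := by
      rw [eq_sub_iff_add_eq]; exact hd.symm
    rw [this]; noncomm_ring
  · intro a
    have hd := h 1 a
    rw [one_mul, one_mul, hγ] at hd
    have : τ a = r * a + a * t - δ 1 * a := by
      rw [eq_sub_iff_add_eq, add_comm]; exact hd.symm
    rw [this]; noncomm_ring
end
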